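/- Let χ = (P,Q) be a polynomial vector field on ℝ² whose set of invariant lines is infinite. Then χ is either the zero vector field, or a central vector field, or a parallel vector field. -/
import Mathlib


open MvPolynomial

/-- Evaluation of a bivariate polynomial at a point of `ℝ × ℝ`
(the variable `X 0` is `x`, the variable `X 1` is `y`). -/
noncomputable def pev (P : MvPolynomial (Fin 2) ℝ) (q : ℝ × ℝ) : ℝ :=
  MvPolynomial.eval ![q.1, q.2] P

/-- The line `{(x, y) | a * x + b * y + c = 0}`. -/
def lineSet (a b c : ℝ) : Set (ℝ × ℝ) := {q : ℝ × ℝ | a * q.1 + b * q.2 + c = 0}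

/-- A subset of `ℝ²` is a line if it is the zero set of an affine form
`a * x + b * y + c` with `(a, b) ≠ (0, 0)`. -/
def IsLine (L : Set (ℝ × ℝ)) : Prop :=
  ∃ a b c : ℝ, (a, b) ≠ (0, 0) ∧ L = lineSet a b c

/-- The line `L` is invariant by the polynomial vector field `χ = P ∂x + Q ∂y`:
for a defining affine form `a * x + b * y + c` of `L`, the polynomial
`a * P + b * Q` vanishes at every point of `L`. -/
def InvLine (P Q : MvPolynomial (Fin 2) ℝ) (L : Set (ℝ × ℝ)) : Prop :=
  ∃ a b c : ℝ, (a, b) ≠ (0, 0) ∧ L = lineSet a b c ∧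
    ∀ q ∈ L, a * pev P q + b * pev Q q = 0

/-- A nonzero polynomial vector field `(P, Q)` is central if there is a center
`(x₀, y₀)` with `(x - x₀) * Q = (y - y₀) * P` identically. -/
def IsCentral (P Q : MvPolynomial (Fin 2) ℝ) : Prop :=
  (P ≠ 0 ∨ Q ≠ 0) ∧ ∃ c : ℝ × ℝ, (X 0 - C c.1) * Q = (X 1 - C c.2) * P

/-- A nonzero polynomial vector field `(P, Q)` is parallel if there is a direction
`v ≠ (0, 0)` with `v₁ * Q = v₂ * P` identically. -/
def IsParallelVF (P Q : MvPolynomial (Fin 2) ℝ) : Prop :=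
  (P ≠ 0 ∨ Q ≠ 0) ∧ ∃ v : ℝ × ℝ, v ≠ (0, 0) ∧ C v.1 * Q = C v.2 * P

lemma mem_lineSet {a b c : ℝ} {q : ℝ × ℝ} : q ∈ lineSet a b c ↔ a * q.1 + b * q.2 + c = 0 :=
  Iff.rfl

lemma pev_zero_of_forall {F : MvPolynomial (Fin 2) ℝ} (h : ∀ q : ℝ × ℝ, pev F q = 0) : F = 0 := by
  apply MvPolynomial.funext
  intro x
  have hx : x = ![x 0, x 1] := by
    funext i; fin_cases i <;> rfl
  have := h (x 0, x 1)
  simp only [pev] at this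
  rw [hx]
  simpa using this

lemma perp_decomp {a b u v : ℝ} (hab : (a, b) ≠ (0, 0)) (h : a * u + b * v = 0) :
    ∃ t : ℝ, u = t * b ∧ v = -(t * a) := by
  have hs : a ^ 2 + b ^ 2 ≠ 0 := by
    intro hz
    have ha : a = 0 := by nlinarith [sq_nonneg a, sq_nonneg b]
    have hb : b = 0 := by nlinarith [sq_nonneg a, sq_nonneg b]
    exact hab (by simp [ha, hb])
  refine ⟨(b * u - a * v) / (a ^ 2 + b ^ 2), ?_, ?_⟩
  · field_simp; linear_combination a * h
  · field_simp; linear_combination b * h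

-- restriction of F to a parametrized line
noncomputable def lpoly (F : MvPolynomial (Fin 2) ℝ) (p w : ℝ × ℝ) : Polynomial ℝ :=
  MvPolynomial.eval₂ Polynomial.C
    ![Polynomial.C p.1 + Polynomial.C w.1 * Polynomial.X,
      Polynomial.C p.2 + Polynomial.C w.2 * Polynomial.X] F

lemma lpoly_eval (F : MvPolynomial (Fin 2) ℝ) (p w : ℝ × ℝ) (t : ℝ) :
    (lpoly F p w).eval t = pev F (p.1 + w.1 * t, p.2 + w.2 * t) := by
  unfold lpoly pev
  rw [show (Polynomial.eval t : Polynomial ℝ → ℝ) = ⇑(Polynomial.evalRingHom t) from rfl]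
  rw [eval₂_comp_left]
  rw [eval]
  congr 1
  · ext r; simp
  · funext i; fin_cases i <;> simp

lemma ab_ne {a b : ℝ} (hab : (a, b) ≠ (0, 0)) : a ^ 2 + b ^ 2 ≠ 0 := by
  intro hz
  have ha : a = 0 := by nlinarith [sq_nonneg a, sq_nonneg b]
  have hb : b = 0 := by nlinarith [sq_nonneg a, sq_nonneg b]
  exact hab (by simp [ha, hb])

lemma base_mem {a b c : ℝ} (hab : (a, b) ≠ (0, 0)) :
    (-(a * c) / (a ^ 2 + b ^ 2), -(b * c) / (a ^ 2 + b ^ 2)) ∈ lineSet a b c := by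
  have hs := ab_ne hab
  rw [mem_lineSet]
  field_simp
  ring

-- distinct lines meet in at most one point
lemma line_inter_unique {a b c a' b' c' : ℝ} (hab : (a, b) ≠ (0, 0)) (hab' : (a', b') ≠ (0, 0))
    {x x' : ℝ × ℝ} (h1 : x ∈ lineSet a b c) (h2 : x ∈ lineSet a' b' c')
    (h1' : x' ∈ lineSet a b c) (h2' : x' ∈ lineSet a' b' c') (hne : x ≠ x') :
    lineSet a b c = lineSet a' b' c' := by
  rw [mem_lineSet] at h1 h2 h1' h2'
  set u : ℝ := x'.1 - x.1 with hu
  set v : ℝ := x'.2 - x.2 with hv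
  have huv : u ≠ 0 ∨ v ≠ 0 := by
    by_contra h
    push_neg at h
    apply hne
    have e1 : x.1 = x'.1 := by have := h.1; simp only [hu] at this; linarith
    have e2 : x.2 = x'.2 := by have := h.2; simp only [hv] at this; linarith
    exact Prod.ext e1 e2
  have e1 : a * u + b * v = 0 := by simp only [hu, hv]; linarith
  have e2 : a' * u + b' * v = 0 := by simp only [hu, hv]; linarith
  -- determinant vanishes
  have hD : a * b' - a' * b = 0 := by
    rcases huv with hu0 | hv0
    · have : (a * b' - a' * b) * u = 0 := by linear_combination b' * e1 - b * e2
      exact (mul_eq_zero.1 this).resolve_right hu0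
    · have : (a * b' - a' * b) * v = 0 := by linear_combination (-a') * e1 + a * e2
      exact (mul_eq_zero.1 this).resolve_right hv0
  -- membership equivalence
  ext q
  simp only [mem_lineSet]
  have hc : c = -(a * x.1 + b * x.2) := by linarith
  have hc' : c' = -(a' * x.1 + b' * x.2) := by linarith
  have hab2 : a ≠ 0 ∨ b ≠ 0 := by
    by_contra h; push_neg at h; exact hab (by simp [h.1, h.2])
  have hab2' : a' ≠ 0 ∨ b' ≠ 0 := by
    by_contra h; push_neg at h; exact hab' (by simp [h.1, h.2])
  constructor
  · intro h
    have k1 : a' * (a * q.1 + b * q.2 + c) = a * (a' * q.1 + b' * q.2 + c') := by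
      rw [hc, hc']; linear_combination (x.2 - q.2) * hD
    have k2 : b' * (a * q.1 + b * q.2 + c) = b * (a' * q.1 + b' * q.2 + c') := by
      rw [hc, hc']; linear_combination (q.1 - x.1) * hD
    rw [h, mul_zero] at k1 k2
    rcases hab2 with h0 | h0
    · exact (mul_eq_zero.1 k1.symm).resolve_left h0
    · exact (mul_eq_zero.1 k2.symm).resolve_left h0
  · intro h
    have k1 : a * (a' * q.1 + b' * q.2 + c') = a' * (a * q.1 + b * q.2 + c) := by
      rw [hc, hc']; linear_combination (q.2 - x.2) * hD
    have k2 : b * (a' * q.1 + b' * q.2 + c') = b' * (a * q.1 + b * q.2 + c) := by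
      rw [hc, hc']; linear_combination (x.1 - q.1) * hD
    rw [h, mul_zero] at k1 k2
    rcases hab2' with h0 | h0
    · exact (mul_eq_zero.1 k1.symm).resolve_left h0
    · exact (mul_eq_zero.1 k2.symm).resolve_left h0

lemma vanish_line {F : MvPolynomial (Fin 2) ℝ} {a b c : ℝ} (hab : (a, b) ≠ (0, 0))
    (h : {q ∈ lineSet a b c | pev F q = 0}.Infinite) :
    ∀ q ∈ lineSet a b c, pev F q = 0 := by
  have hs := ab_ne hab
  set p : ℝ × ℝ := (-(a * c) / (a ^ 2 + b ^ 2), -(b * c) / (a ^ 2 + b ^ 2)) with hp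
  have hpmem : p ∈ lineSet a b c := base_mem hab
  -- the parameter of a point on the line
  set tf : ℝ × ℝ → ℝ := fun q => (b * (q.1 - p.1) - a * (q.2 - p.2)) / (a ^ 2 + b ^ 2) with htf
  have key : ∀ q ∈ lineSet a b c, q.1 = p.1 + b * tf q ∧ q.2 = p.2 + (-a) * tf q := by
    intro q hq
    rw [mem_lineSet] at hq hpmem
    have hperp : a * (q.1 - p.1) + b * (q.2 - p.2) = 0 := by linarith
    obtain ⟨t, h1, h2⟩ := perp_decomp hab hperp
    have htq : tf q = t := by
      simp only [htf, h1, h2]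
      field_simp
      ring
    rw [htq]
    constructor <;> [linarith [h1]; linarith [h2]]
  set G : Polynomial ℝ := lpoly F p (b, -a) with hG
  have hGz : G = 0 := by
    apply Polynomial.eq_zero_of_infinite_isRoot
    apply Set.Infinite.mono (s := tf '' {q ∈ lineSet a b c | pev F q = 0})
    · rintro t ⟨q, ⟨hql, hqv⟩, rfl⟩
      have hk := key q hql
      show G.eval (tf q) = 0
      have e1 : p.1 + (b, -a).1 * tf q = q.1 := hk.1.symm
      have e2 : p.2 + (b, -a).2 * tf q = q.2 := hk.2.symm
      rw [hG, lpoly_eval, e1, e2]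
      simpa using hqv
    · apply Set.Infinite.image _ h
      intro q hq q' hq' he
      have h1 := key q hq.1
      have h2 := key q' hq'.1
      rw [he] at h1
      exact Prod.ext (by rw [h1.1, h2.1]) (by rw [h1.2, h2.2])
  intro q hq
  have hk := key q hq
  have : G.eval (tf q) = 0 := by rw [hGz]; simp
  have e1 : p.1 + (b, -a).1 * tf q = q.1 := hk.1.symm
  have e2 : p.2 + (b, -a).2 * tf q = q.2 := hk.2.symm
  rw [hG, lpoly_eval, e1, e2] at this
  simpa using this

lemma vanish_many_lines {F : MvPolynomial (Fin 2) ℝ} {S : Set (Set (ℝ × ℝ))} (hS : S.Infinite)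
    (h : ∀ L ∈ S, ∃ a b c : ℝ, (a, b) ≠ (0, 0) ∧ L = lineSet a b c ∧ ∀ q ∈ L, pev F q = 0) :
    F = 0 := by
  apply pev_zero_of_forall
  intro q
  -- countable subfamily
  set e : ℕ ↪ ↥S := hS.natEmbedding with he
  set L : ℕ → Set (ℝ × ℝ) := fun i => (e i : Set (ℝ × ℝ)) with hL
  have hLmem : ∀ i, L i ∈ S := fun i => (e i).2
  have hLne : ∀ i j, i ≠ j → L i ≠ L j := by
    intro i j hij hLeq
    exact hij (e.injective (Subtype.ext hLeq))
  choose a b c hab hLeq hvan using fun i => h (L i) (hLmem i)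
  by_cases hq : ∃ i, q ∈ L i
  · obtain ⟨i, hi⟩ := hq
    exact hvan i q hi
  push_neg at hq
  -- bad slopes
  set Bad : Set ℝ := (⋃ i, {s | a i + s * b i = 0}) ∪
      ⋃ i, ⋃ j, ⋃ (_ : i ≠ j), {s | ∃ t : ℝ, (q.1 + t, q.2 + s * t) ∈ L i ∩ L j} with hBad
  have hBadC : Bad.Countable := by
    apply Set.Countable.union
    · apply Set.countable_iUnion
      intro i
      apply Set.Subsingleton.countable
      intro s hs s' hs'
      simp only [Set.mem_setOf_eq] at hs hs'
      rcases eq_or_ne (b i) 0 with hb | hb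
      · exfalso
        rw [hb, mul_zero, add_zero] at hs
        exact hab i (by simp [hs, hb])
      · have : s * b i = s' * b i := by linarith
        exact mul_right_cancel₀ hb this
    · apply Set.countable_iUnion; intro i
      apply Set.countable_iUnion; intro j
      apply Set.countable_iUnion; intro hij
      apply Set.Subsingleton.countable
      rintro s ⟨t, ht⟩ s' ⟨t', ht'⟩
      -- the two points must be equal
      have hxx : ((q.1 + t, q.2 + s * t) : ℝ × ℝ) = (q.1 + t', q.2 + s' * t') := by
        by_contra hne
        apply hLne i j hij
        rw [hLeq i, hLeq j]
        exact line_inter_unique (hab i) (hab j)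
          (by rw [← hLeq i]; exact ht.1) (by rw [← hLeq j]; exact ht.2)
          (by rw [← hLeq i]; exact ht'.1) (by rw [← hLeq j]; exact ht'.2) hne
      have ht1 : t = t' := by
        have := congrArg Prod.fst hxx; simp only at this; linarith
      have htne : t ≠ 0 := by
        intro h0
        apply hq i
        have : ((q.1 + t, q.2 + s * t) : ℝ × ℝ) = q := by rw [h0]; simp
        rw [← this]; exact ht.1
      have := congrArg Prod.snd hxx
      simp only at this
      rw [← ht1] at this
      have : s * t = s' * t := by linarith
      exact mul_right_cancel₀ htne this
  -- pick a good slope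
  obtain ⟨s, hs⟩ : ∃ s : ℝ, s ∉ Bad := by
    by_contra hcon
    push_neg at hcon
    have : (Set.univ : Set ℝ).Countable := by
      apply Set.Countable.mono _ hBadC
      intro x _; exact hcon x
    exact Set.not_countable_univ this
  have hs1 : ∀ i, a i + s * b i ≠ 0 := by
    intro i h0
    exact hs (Or.inl (Set.mem_iUnion.2 ⟨i, h0⟩))
  -- intersection parameters
  set tp : ℕ → ℝ := fun i => -(a i * q.1 + b i * q.2 + c i) / (a i + s * b i) with htp
  have hmem : ∀ i, ((q.1 + tp i, q.2 + s * tp i) : ℝ × ℝ) ∈ L i := by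
    intro i
    rw [hLeq i, mem_lineSet]
    have expand : a i * (q.1 + tp i) + b i * (q.2 + s * tp i) + c i
        = (a i * q.1 + b i * q.2 + c i) + tp i * (a i + s * b i) := by ring
    rw [expand, htp]
    simp only
    rw [div_mul_cancel₀ _ (hs1 i)]
    ring
  have htinj : Function.Injective tp := by
    intro i j hij
    by_contra hne
    apply hs
    right
    exact Set.mem_iUnion.2 ⟨i, Set.mem_iUnion.2 ⟨j, Set.mem_iUnion.2
      ⟨hne, tp i, hmem i, by rw [hij]; exact hmem j⟩⟩⟩
  -- the restricted polynomial vanishes identically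
  set G : Polynomial ℝ := lpoly F q (1, s) with hG
  have hGz : G = 0 := by
    apply Polynomial.eq_zero_of_infinite_isRoot
    apply Set.Infinite.mono (s := Set.range tp)
    · rintro t ⟨i, rfl⟩
      show G.eval (tp i) = 0
      rw [hG, lpoly_eval]
      have : ((q.1 + (1, s).1 * tp i, q.2 + (1, s).2 * tp i) : ℝ × ℝ)
          = (q.1 + tp i, q.2 + s * tp i) := by
        simp
      rw [this]
      exact hvan i _ (hmem i)
    · exact Set.infinite_range_of_injective htinj
  have : G.eval 0 = 0 := by rw [hGz]; simp
  rw [hG, lpoly_eval] at this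
  simpa using this

lemma ne00 {a b : ℝ} (h : (a, b) ≠ (0, 0)) : a ≠ 0 ∨ b ≠ 0 := by
  by_contra hc
  push_neg at hc
  exact h (by simp [hc.1, hc.2])


/-- **Theorem.** A polynomial vector field `(P, Q)` whose set of invariant lines is
infinite is either the zero vector field, or a central vector field, or a parallel
vector field. -/
theorem infinite_invariant_lines_classification (P Q : MvPolynomial (Fin 2) ℝ)
    (hinf : {M : Set (ℝ × ℝ) | InvLine P Q M}.Infinite) :
    (P = 0 ∧ Q = 0) ∨ IsCentral P Q ∨ IsParallelVF P Q := by
  by_cases hzero : P = 0 ∧ Q = 0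
  · exact Or.inl hzero
  have hnz : P ≠ 0 ∨ Q ≠ 0 := by tauto
  set S := {M : Set (ℝ × ℝ) | InvLine P Q M} with hSdef
  have hch : ∀ L : ↥S, ∃ a b c : ℝ, (a, b) ≠ (0, 0) ∧ (L : Set (ℝ × ℝ)) = lineSet a b c ∧
      ∀ q ∈ (L : Set (ℝ × ℝ)), a * pev P q + b * pev Q q = 0 := fun L => L.2
  choose A B Cc hAB hEq hVan using hch
  -- pev computations
  have pev_comb : ∀ (x y : ℝ) (q : ℝ × ℝ),
      pev (C x * P + C y * Q) q = x * pev P q + y * pev Q q := by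
    intro x y q; simp [pev]
  have pev_cen : ∀ (p q : ℝ × ℝ),
      pev ((X 0 - C p.1) * Q - (X 1 - C p.2) * P) q
        = (q.1 - p.1) * pev Q q - (q.2 - p.2) * pev P q := by
    intro p q; simp [pev]
  -- normalized direction
  set n : ↥S → ℝ × ℝ := fun L => if B L = 0 then (1, 0) else (A L / B L, 1) with hn
  have hdet : ∀ L L' : ↥S, n L = n L' ↔ A L * B L' - A L' * B L = 0 := by
    intro L L'
    rcases eq_or_ne (B L) 0 with hb | hb <;> rcases eq_or_ne (B L') 0 with hb' | hb'
    · have e1 : n L = (1, 0) := by simp [hn, hb]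
      have e2 : n L' = (1, 0) := by simp [hn, hb']
      constructor
      · intro _; rw [hb, hb']; ring
      · intro _; rw [e1, e2]
    · have e1 : n L = (1, 0) := by simp [hn, hb]
      have e2 : n L' = (A L' / B L', 1) := by simp [hn, hb']
      have ha : A L ≠ 0 := (ne00 (hAB L)).resolve_right (fun h => h hb)
      constructor
      · intro h; rw [e1, e2] at h
        exact absurd (congrArg Prod.snd h) (by norm_num)
      · intro h
        exfalso
        have h2 : A L * B L' = 0 := by linear_combination h + A L' * hb
        rcases mul_eq_zero.1 h2 with h' | h' <;> [exact ha h'; exact hb' h']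
    · have e1 : n L = (A L / B L, 1) := by simp [hn, hb]
      have e2 : n L' = (1, 0) := by simp [hn, hb']
      have ha' : A L' ≠ 0 := (ne00 (hAB L')).resolve_right (fun h => h hb')
      constructor
      · intro h; rw [e1, e2] at h
        exact absurd (congrArg Prod.snd h) (by norm_num)
      · intro h
        exfalso
        have h2 : A L' * B L = 0 := by linear_combination -h + A L * hb'
        rcases mul_eq_zero.1 h2 with h' | h' <;> [exact ha' h'; exact hb h']
    · have e1 : n L = (A L / B L, 1) := by simp [hn, hb]
      have e2 : n L' = (A L' / B L', 1) := by simp [hn, hb']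
      rw [e1, e2]
      constructor
      · intro h
        have h1 := congrArg Prod.fst h
        simp only at h1
        rw [div_eq_div_iff hb hb'] at h1
        linarith
      · intro h
        have h1 : A L / B L = A L' / B L' := by
          rw [div_eq_div_iff hb hb']
          linarith
        rw [Prod.ext_iff]
        exact ⟨h1, rfl⟩
  by_cases hpar : ∃ d : ℝ × ℝ, {L : ↥S | n L = d}.Infinite
  · -- parallel case
    obtain ⟨d, hd⟩ := hpar
    obtain ⟨L₀, hL₀⟩ := hd.nonempty
    have hF : (C (A L₀) * P + C (B L₀) * Q : MvPolynomial (Fin 2) ℝ) = 0 := by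
      apply vanish_many_lines (S := (fun L : ↥S => (L : Set (ℝ × ℝ))) '' {L : ↥S | n L = d})
      · exact hd.image fun L₁ _ L₂ _ h => Subtype.ext h
      · rintro M ⟨L, hL, rfl⟩
        refine ⟨A L, B L, Cc L, hAB L, hEq L, ?_⟩
        intro q hq
        rw [pev_comb]
        have hv := hVan L q hq
        have det0 : A L * B L₀ - A L₀ * B L = 0 := (hdet L L₀).1 (hL.trans hL₀.symm)
        have k1 : A L * (A L₀ * pev P q + B L₀ * pev Q q) = 0 := by
          linear_combination A L₀ * hv + pev Q q * det0
        have k2 : B L * (A L₀ * pev P q + B L₀ * pev Q q) = 0 := by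
          linear_combination B L₀ * hv - pev P q * det0
        rcases ne00 (hAB L) with h0 | h0
        · exact (mul_eq_zero.1 k1).resolve_left h0
        · exact (mul_eq_zero.1 k2).resolve_left h0
    refine Or.inr (Or.inr ⟨hnz, (B L₀, -A L₀), ?_, ?_⟩)
    · intro h
      rw [Prod.ext_iff] at h
      simp only at h
      exact hAB L₀ (by
        rw [Prod.ext_iff]
        exact ⟨by simpa using h.2, h.1⟩)
    · show C (B L₀) * Q = C (-A L₀) * P
      rw [map_neg]
      linear_combination hF
  by_cases hcen : ∃ p : ℝ × ℝ, {L : ↥S | p ∈ (L : Set (ℝ × ℝ))}.Infinite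
  · -- central case
    obtain ⟨p, hp⟩ := hcen
    have hF : ((X 0 - C p.1) * Q - (X 1 - C p.2) * P : MvPolynomial (Fin 2) ℝ) = 0 := by
      apply vanish_many_lines
        (S := (fun L : ↥S => (L : Set (ℝ × ℝ))) '' {L : ↥S | p ∈ (L : Set (ℝ × ℝ))})
      · exact hp.image fun L₁ _ L₂ _ h => Subtype.ext h
      · rintro M ⟨L, hL, rfl⟩
        refine ⟨A L, B L, Cc L, hAB L, hEq L, ?_⟩
        intro q hq
        rw [pev_cen]
        have hv := hVan L q hq
        have hqL : A L * q.1 + B L * q.2 + Cc L = 0 := by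
          rw [← mem_lineSet, ← hEq L]; exact hq
        have hpL : A L * p.1 + B L * p.2 + Cc L = 0 := by
          rw [← mem_lineSet, ← hEq L]; exact hL
        have hperp : A L * (q.1 - p.1) + B L * (q.2 - p.2) = 0 := by linarith
        obtain ⟨t, h1, h2⟩ := perp_decomp (hAB L) hperp
        rw [h1, h2]
        linear_combination t * hv
    exact Or.inr (Or.inl ⟨hnz, p, sub_eq_zero.1 hF⟩)
  -- remaining case: P = Q = 0, contradiction
  exfalso
  push_neg at hpar hcen
  have key : ∀ L₀ : ↥S, (∀ q ∈ (L₀ : Set (ℝ × ℝ)), pev P q = 0 ∧ pev Q q = 0) := by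
    intro L₀
    set T : Set ↥S := {L : ↥S | n L ≠ n L₀} with hT
    have : Infinite ↥S := hinf.to_subtype
    have hTinf : T.Infinite := by
      have : T = Set.univ \ {L : ↥S | n L = n L₀} := by
        ext L; simp [hT]
      rw [this]
      exact Set.infinite_univ.diff (hpar (n L₀))
    set D : ↥S → ℝ := fun L => A L₀ * B L - A L * B L₀ with hDdef
    have hD : ∀ L ∈ T, D L ≠ 0 := by
      intro L hL h0
      exact hL (((hdet L L₀).2 (by simp only [hDdef] at h0; linarith)).trans rfl) |>.elim
    set x : ↥S → ℝ × ℝ := fun L =>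
      ((B L₀ * Cc L - B L * Cc L₀) / D L, (A L * Cc L₀ - A L₀ * Cc L) / D L) with hx
    have hx0 : ∀ L ∈ T, x L ∈ lineSet (A L₀) (B L₀) (Cc L₀) := by
      intro L hL
      rw [mem_lineSet]
      simp only [hx]
      field_simp [hD L hL]
      ring
    have hxL : ∀ L ∈ T, x L ∈ lineSet (A L) (B L) (Cc L) := by
      intro L hL
      rw [mem_lineSet]
      simp only [hx]
      field_simp [hD L hL]
      ring
    have hvanx : ∀ L ∈ T, pev P (x L) = 0 ∧ pev Q (x L) = 0 := by
      intro L hL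
      have hv0 : A L₀ * pev P (x L) + B L₀ * pev Q (x L) = 0 :=
        hVan L₀ (x L) (by rw [hEq L₀]; exact hx0 L hL)
      have hv1 : A L * pev P (x L) + B L * pev Q (x L) = 0 :=
        hVan L (x L) (by rw [hEq L]; exact hxL L hL)
      have k1 : pev P (x L) * D L = 0 := by
        simp only [hDdef]
        linear_combination B L * hv0 - B L₀ * hv1
      have k2 : pev Q (x L) * D L = 0 := by
        simp only [hDdef]
        linear_combination A L₀ * hv1 - A L * hv0
      exact ⟨(mul_eq_zero.1 k1).resolve_right (hD L hL),
             (mul_eq_zero.1 k2).resolve_right (hD L hL)⟩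
    have himg : (x '' T).Infinite := by
      by_contra hfinimg
      rw [Set.not_infinite] at hfinimg
      have hsub : T ⊆ ⋃ p ∈ x '' T, {L : ↥S | p ∈ (L : Set (ℝ × ℝ))} := by
        intro L hL
        apply Set.mem_biUnion (Set.mem_image_of_mem x hL)
        show x L ∈ (L : Set (ℝ × ℝ))
        rw [hEq L]; exact hxL L hL
      exact hTinf (Set.Finite.subset (hfinimg.biUnion (fun p _ => hcen p)) hsub)
    have hPinf : {q ∈ lineSet (A L₀) (B L₀) (Cc L₀) | pev P q = 0}.Infinite := by
      apply himg.mono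
      rintro _ ⟨L, hL, rfl⟩
      exact ⟨hx0 L hL, (hvanx L hL).1⟩
    have hQinf : {q ∈ lineSet (A L₀) (B L₀) (Cc L₀) | pev Q q = 0}.Infinite := by
      apply himg.mono
      rintro _ ⟨L, hL, rfl⟩
      exact ⟨hx0 L hL, (hvanx L hL).2⟩
    intro q hq
    rw [hEq L₀] at hq
    exact ⟨vanish_line (hAB L₀) hPinf q hq, vanish_line (hAB L₀) hQinf q hq⟩
  have hP0 : P = 0 := by
    apply vanish_many_lines hinf
    intro M hM
    exact ⟨A ⟨M, hM⟩, B ⟨M, hM⟩, Cc ⟨M, hM⟩, hAB ⟨M, hM⟩, hEq ⟨M, hM⟩,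
      fun q hq => (key ⟨M, hM⟩ q hq).1⟩
  have hQ0 : Q = 0 := by
    apply vanish_many_lines hinf
    intro M hM
    exact ⟨A ⟨M, hM⟩, B ⟨M, hM⟩, Cc ⟨M, hM⟩, hAB ⟨M, hM⟩, hEq ⟨M, hM⟩,
      fun q hq => (key ⟨M, hM⟩ q hq).2⟩
  exact hzero ⟨hP0, hQ0⟩
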